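/- arXiv:2206.04206 — 3 statements merged into one kernel-verified Lean document; each statement's English description precedes it below -/
import Mathlib

section
/- Let u, v ∈ ℝ^e and let λ ∈ ℝ satisfy min_i(v_i − u_i) ≤ λ ≤ max_i(v_i − u_i). Define z ∈ ℝ^e by z_i = max(λ + u_i, v_i) for each i (so z = λ ⊙ u ⊞ v is a point of the tropical line segment between u and v). Then d_tr(u,z) + d_tr(z,v) = d_tr(u,v); that is, the tropical line segment is a geodesic for the tropical metric. -/
/-!
With `f = u - v` and `c = -λ` one has `u - z = c ⊓ f` and `z - v = (c ⊔ f) + λ`, so `d_tr(u, z)`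
and `d_tr(z, v)` are the spreads `max - min` of `f` clipped at `c` from above and from below.
Since `min f ≤ c ≤ max f`, these spreads are `c - min f` and `max f - c`, which add up to the
spread `max f - min f = d_tr(u, v)`.
-/

/-- The tropical distance (generalized Hilbert projective metric) on `ℝ^e`:
`d_tr(v,w) = max_i (v_i - w_i) - min_i (v_i - w_i)`. -/
noncomputable def dtr {e : ℕ} (he : 0 < e) (v w : Fin e → ℝ) : ℝ :=
  (Finset.univ.sup' ⟨⟨0, he⟩, Finset.mem_univ _⟩ fun i => v i - w i) -
  (Finset.univ.inf' ⟨⟨0, he⟩, Finset.mem_univ _⟩ fun i => v i - w i)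

namespace Finset

variable {ι α : Type*}

def spread [Lattice α] [Sub α] (s : Finset ι) (hs : s.Nonempty) (f : ι → α) : α :=
  s.sup' hs f - s.inf' hs f

section DistribLattice

variable [DistribLattice α] [AddCommGroup α] {s : Finset ι} (hs : s.Nonempty) {f : ι → α} {c : α}

theorem spread_inf_const (h₁ : s.inf' hs f ≤ c) (h₂ : c ≤ s.sup' hs f) :
    s.spread hs (fun i => c ⊓ f i) = c - s.inf' hs f := by
  have inf_clip : c ⊓ s.inf' hs f = s.inf' hs fun i => c ⊓ f i :=
    apply_inf'_eq_inf'_comp hs (c ⊓ ·) (inf_inf_distrib_left c)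
  rw [spread, ← sup'_inf_distrib_left, ← inf_clip, inf_eq_left.2 h₂, inf_eq_right.2 h₁]

theorem spread_sup_const (h₁ : s.inf' hs f ≤ c) (h₂ : c ≤ s.sup' hs f) :
    s.spread hs (fun i => c ⊔ f i) = s.sup' hs f - c := by
  have sup_clip : c ⊔ s.sup' hs f = s.sup' hs fun i => c ⊔ f i :=
    apply_sup'_eq_sup'_comp hs (c ⊔ ·) (sup_sup_distrib_left c)
  rw [spread, ← inf'_sup_distrib_left, ← sup_clip, sup_eq_right.2 h₂, sup_eq_left.2 h₁]

theorem spread_inf_const_add_spread_sup_const (h₁ : s.inf' hs f ≤ c) (h₂ : c ≤ s.sup' hs f) :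
    s.spread hs (fun i => c ⊓ f i) + s.spread hs (fun i => c ⊔ f i) = s.spread hs f := by
  rw [spread_inf_const hs h₁ h₂, spread_sup_const hs h₁ h₂, spread, sub_add_sub_cancel']

end DistribLattice

theorem spread_add_const [LinearOrder α] [AddCommGroup α] [IsOrderedAddMonoid α] {s : Finset ι}
    (hs : s.Nonempty) (f : ι → α) (a : α) :
    s.spread hs (fun i => f i + a) = s.spread hs f := by
  have inf_add : s.inf' hs f + a = s.inf' hs fun i => f i + a :=
    map_finset_inf' (OrderIso.addRight a) hs f
  rw [spread, spread, ← sup'_add, ← inf_add, add_sub_add_right_eq_sub]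

end Finset

open Finset

theorem dtr_eq_spread {e : ℕ} (he : 0 < e) (v w : Fin e → ℝ) :
    dtr he v w = univ.spread ⟨⟨0, he⟩, mem_univ _⟩ (v - w) :=
  rfl

/-- for `λ` between `min_i(v_i - u_i)` and `max_i(v_i - u_i)`,
the point `z = λ ⊙ u ⊞ v` of the tropical line segment between `u` and `v`
satisfies `d_tr(u,z) + d_tr(z,v) = d_tr(u,v)`; that is, the tropical line
segment is a geodesic for the tropical metric. -/
theorem tropical_segment_is_geodesic {e : ℕ} (he : 0 < e) (u v : Fin e → ℝ)
    (lam : ℝ)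
    (hmin : (Finset.univ.inf' ⟨⟨0, he⟩, Finset.mem_univ _⟩ fun i => v i - u i) ≤ lam)
    (hmax : lam ≤ Finset.univ.sup' ⟨⟨0, he⟩, Finset.mem_univ _⟩ fun i => v i - u i)
    (z : Fin e → ℝ) (hz : z = fun i => max (lam + u i) (v i)) :
    dtr he u z + dtr he z v = dtr he u v := by
  have hne : (univ : Finset (Fin e)).Nonempty := ⟨⟨0, he⟩, mem_univ _⟩
  have hinf_le : univ.inf' hne (u - v) ≤ -lam := by
    obtain ⟨i, -, hi⟩ := (le_sup'_iff hne).1 hmax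
    exact inf'_le_of_le _ (mem_univ i) (by simp only [Pi.sub_apply]; linarith)
  have hle_sup : -lam ≤ univ.sup' hne (u - v) := by
    obtain ⟨i, -, hi⟩ := (inf'_le_iff hne).1 hmin
    exact le_sup'_of_le _ (mem_univ i) (by simp only [Pi.sub_apply]; linarith)
  have hdist_uz : dtr he u z = univ.spread hne fun i => -lam ⊓ (u - v) i := by
    rw [dtr_eq_spread, hz]
    congr 1
    ext i
    simp only [Pi.sub_apply]
    rw [← min_sub_sub_left, sub_add_cancel_right]
  have hdist_zv : dtr he z v = univ.spread hne fun i => -lam ⊔ (u - v) i := by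
    rw [dtr_eq_spread, hz, ← spread_add_const hne (fun i => -lam ⊔ (u - v) i) lam]
    congr 1
    ext i
    simp only [Pi.sub_apply]
    rw [← max_sub_sub_right, ← max_add_add_right, max_comm]
    congr 1 <;> ring
  rw [hdist_uz, hdist_zv, spread_inf_const_add_spread_sup_const hne hinf_le hle_sup, dtr_eq_spread]
end

section
/- Let u, v ∈ ℝ^e, λ ∈ ℝ with min_i(v_i − u_i) ≤ λ ≤ max_i(v_i − u_i), and define z ∈ ℝ^e by z_i = max(λ + u_i, v_i). Then d_tr(u,z) = max_i(v_i − u_i) − λ and d_tr(z,v) = λ − min_i(v_i − u_i). -/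
namespace Antitone

variable {α β ι : Type*} [LinearOrder α] [LinearOrder β] {g : α → β}

theorem map_finset_sup' (hg : Antitone g) {s : Finset ι} (hs : s.Nonempty) (f : ι → α) :
    g (s.sup' hs f) = s.inf' hs (g ∘ f) :=
  Finset.apply_sup'_eq_sup'_comp (γ := βᵒᵈ) hs g fun _ _ => hg.map_max

theorem map_finset_inf' (hg : Antitone g) {s : Finset ι} (hs : s.Nonempty) (f : ι → α) :
    g (s.inf' hs f) = s.sup' hs (g ∘ f) :=
  hg.dual.map_finset_sup' (α := αᵒᵈ) (β := βᵒᵈ) hs f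

end Antitone

theorem dtr_eq_of_sub_eq_antitone {e : ℕ} (he : 0 < e) {v w d : Fin e → ℝ} {φ : ℝ → ℝ}
    (hφ : Antitone φ) (h : ∀ i, v i - w i = φ (d i)) :
    dtr he v w = φ (Finset.univ.inf' ⟨⟨0, he⟩, Finset.mem_univ _⟩ d) -
      φ (Finset.univ.sup' ⟨⟨0, he⟩, Finset.mem_univ _⟩ d) := by
  simp only [dtr, h]
  exact congrArg₂ (· - ·) (hφ.map_finset_inf' _ d).symm (hφ.map_finset_sup' _ d).symm

/-- for `λ` between `min_i(v_i - u_i)` and `max_i(v_i - u_i)` and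
`z_i = max(λ + u_i, v_i)`, one has `d_tr(u,z) = max_i(v_i − u_i) − λ` and
`d_tr(z,v) = λ − min_i(v_i − u_i)`. -/
theorem tropical_dist_along_segment {e : ℕ} (he : 0 < e) (u v : Fin e → ℝ)
    (lam : ℝ)
    (hmin : (Finset.univ.inf' ⟨⟨0, he⟩, Finset.mem_univ _⟩ fun i => v i - u i) ≤ lam)
    (hmax : lam ≤ Finset.univ.sup' ⟨⟨0, he⟩, Finset.mem_univ _⟩ fun i => v i - u i)
    (z : Fin e → ℝ) (hz : z = fun i => max (lam + u i) (v i)) :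
    dtr he u z = (Finset.univ.sup' ⟨⟨0, he⟩, Finset.mem_univ _⟩ fun i => v i - u i) - lam ∧
    dtr he z v = lam - (Finset.univ.inf' ⟨⟨0, he⟩, Finset.mem_univ _⟩ fun i => v i - u i) := by
  subst hz
  constructor
  · have hφ : Antitone fun x => -max lam x := fun a b hab => by dsimp only; gcongr
    rw [dtr_eq_of_sub_eq_antitone he hφ (d := fun i => v i - u i) fun i => by
      rw [← neg_sub, ← max_sub_sub_right, add_sub_cancel_right], max_eq_left hmin,
      max_eq_right hmax]
    ring
  · have hφ : Antitone fun x => max (lam - x) 0 := fun a b hab => by dsimp only; gcongr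
    rw [dtr_eq_of_sub_eq_antitone he hφ (d := fun i => v i - u i) fun i => by
      rw [← max_sub_sub_right, sub_self, sub_sub_eq_add_sub, add_sub_right_comm],
      max_eq_left (sub_nonneg.2 hmin), max_eq_right (sub_nonpos.2 hmax), sub_zero]
end

section
/- Fix m ≥ 3 and index the coordinates of ℝ^{\binom{m}{2}} by unordered pairs {i,j} of distinct elements of {1,…,m}. Say a vector x ∈ ℝ^{\binom{m}{2}} satisfies the three-point condition if for every triple of distinct i, j, k the maximum of {x_{ij}, x_{ik}, x_{jk}} is attained at least twice. If u and v both satisfy the three-point condition, then for all a, b ∈ ℝ the tropical linear combination w defined by w_{ij} = max(a + u_{ij}, b + v_{ij}) also satisfies the three-point condition. In particular, the set of vectors satisfying the three-point condition (the tropicalized linear space Trop(L_m), i.e., the image of the space of ultrametrics) is tropically convex. -/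
/-! The maximum of `{a, b, c}` is attained at least twice exactly when each of the three values is
at most the maximum of the other two. That reformulation is a conjunction of inequalities between
maxima, so it survives adding a constant to all three values and taking componentwise maxima of two
triples; applied to every triple of indices, this gives the tropical convexity of the three-point
condition. -/

/-- The maximum of `{a, b, c}` is attained at least twice: two of the three
values are equal and are greater than or equal to the third. -/
def MaxAttainedTwice (a b c : ℝ) : Prop :=
  (a = b ∧ c ≤ a) ∨ (a = c ∧ b ≤ a) ∨ (b = c ∧ a ≤ b)

/-- The three-point condition for a vector indexed by (unordered) pairs of
elements of `{1,…,m}`, encoded as a symmetric function `Fin m → Fin m → ℝ`: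
for every triple of distinct indices, the maximum of the three pairwise
coordinates is attained at least twice.  This condition cuts out the
tropicalized linear space `Trop(L_m)`, the image of the space of
ultrametrics. -/
def ThreePointCond {m : ℕ} (x : Fin m → Fin m → ℝ) : Prop :=
  ∀ i j k : Fin m, i ≠ j → i ≠ k → j ≠ k →
    MaxAttainedTwice (x i j) (x i k) (x j k)

theorem maxAttainedTwice_iff_le_max {a b c : ℝ} :
    MaxAttainedTwice a b c ↔ a ≤ max b c ∧ b ≤ max a c ∧ c ≤ max a b := by
  simp only [MaxAttainedTwice, le_max_iff]
  constructor
  · rintro (⟨rfl, h⟩ | ⟨rfl, h⟩ | ⟨rfl, h⟩) <;> simp [h]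
  · grind

theorem MaxAttainedTwice.const_add {a b c : ℝ} (h : MaxAttainedTwice a b c) (t : ℝ) :
    MaxAttainedTwice (t + a) (t + b) (t + c) := by
  simpa only [MaxAttainedTwice, add_right_inj, add_le_add_iff_left] using h

theorem MaxAttainedTwice.max {a b c a' b' c' : ℝ} (h : MaxAttainedTwice a b c)
    (h' : MaxAttainedTwice a' b' c') :
    MaxAttainedTwice (max a a') (max b b') (max c c') := by
  rw [maxAttainedTwice_iff_le_max] at *
  obtain ⟨ha, hb, hc⟩ := h
  obtain ⟨ha', hb', hc'⟩ := h'
  refine ⟨?_, ?_, ?_⟩ <;> rw [max_max_max_comm] <;> gcongr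

theorem ThreePointCond.const_add {m : ℕ} {x : Fin m → Fin m → ℝ} (hx : ThreePointCond x)
    (t : ℝ) : ThreePointCond fun i j => t + x i j :=
  fun i j k hij hik hjk => (hx i j k hij hik hjk).const_add t

theorem ThreePointCond.max {m : ℕ} {x y : Fin m → Fin m → ℝ} (hx : ThreePointCond x)
    (hy : ThreePointCond y) : ThreePointCond fun i j => max (x i j) (y i j) :=
  fun i j k hij hik hjk => (hx i j k hij hik hjk).max (hy i j k hij hik hjk)

theorem threePointCond_tropically_convex_general {m : ℕ}
    (u v : Fin m → Fin m → ℝ)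
    (hu : ThreePointCond u) (hv : ThreePointCond v) (a b : ℝ) :
    ThreePointCond (fun i j => max (a + u i j) (b + v i j)) :=
  (hu.const_add a).max (hv.const_add b)

/-- if `u` and `v` satisfy the three-point condition, then so does
every tropical linear combination `w` with `w_{ij} = max(a + u_{ij}, b + v_{ij})`;
in particular `Trop(L_m)` is tropically convex. -/
theorem threePointCond_tropically_convex {m : ℕ} (hm : 3 ≤ m)
    (u v : Fin m → Fin m → ℝ)
    (hu_symm : ∀ i j, u i j = u j i) (hv_symm : ∀ i j, v i j = v j i)
    (hu : ThreePointCond u) (hv : ThreePointCond v) (a b : ℝ) :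
    ThreePointCond (fun i j => max (a + u i j) (b + v i j)) :=
  threePointCond_tropically_convex_general u v hu hv a b
end
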